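/- Every pyramidal tour (without step-backs) x̂ on {1,...,n} corresponds to a vertex of PSB(n) adjacent in the 1-skeleton to the vertex of the pyramidal tour that visits all cities 2,...,n−1 in ascending order (the tour ⟨1,2,...,n⟩ with return edge (n,1)), and also adjacent to the vertex of the tour visiting all of 2,...,n−1 in descending order. -/

import Mathlib

/-- A Hamiltonian tour on the cities `{1,…,n}` (represented as `Fin n`,
city `c` corresponding to the element `c-1`): a permutation acting cyclically on all cities. -/
def IsTour {n : ℕ} (τ : Equiv.Perm (Fin n)) : Prop :=
  ∀ i j : Fin n, ∃ k : ℕ, (τ ^ k) i = j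

/-- `i` is a peak of the tour `τ`. -/
def IsPeak {n : ℕ} (τ : Equiv.Perm (Fin n)) (i : Fin n) : Prop :=
  τ⁻¹ i < i ∧ τ i < i

/-- `i` is a step-back peak of `τ`: either `τ⁻¹ i < i`, `τ i = i - 1`, `τ² i > i`
(ascending step-back) or `τ⁻² i > i`, `τ⁻¹ i = i - 1`, `τ i < i` (descending step-back). -/
def IsStepBackPeak {n : ℕ} (τ : Equiv.Perm (Fin n)) (i : Fin n) : Prop :=
  (τ⁻¹ i < i ∧ ((τ i : ℕ) + 1 = (i : ℕ)) ∧ i < τ (τ i)) ∨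
  (i < τ⁻¹ (τ⁻¹ i) ∧ ((τ⁻¹ i : ℕ) + 1 = (i : ℕ)) ∧ τ i < i)

/-- A pyramidal tour: a Hamiltonian tour whose unique peak is the last city `n`. -/
def IsPyramidal {n : ℕ} (τ : Equiv.Perm (Fin n)) : Prop :=
  IsTour τ ∧ ∀ i : Fin n, IsPeak τ i ↔ (i : ℕ) = n - 1

/-- A pyramidal tour with step-backs: a Hamiltonian tour with exactly one proper peak
(a peak that is not a step-back peak), namely the last city `n`. -/
def IsPSB {n : ℕ} (τ : Equiv.Perm (Fin n)) : Prop :=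
  IsTour τ ∧ ∀ i : Fin n, (IsPeak τ i ∧ ¬ IsStepBackPeak τ i) ↔ (i : ℕ) = n - 1

/-- City `i` is visited by `τ` in ascending order (taking step-backs into account):
either the successor of `i` is larger and `i` is not the lower city of a descending
step-back, or `i` is an ascending step-back peak. -/
def Ascends {n : ℕ} (τ : Equiv.Perm (Fin n)) (i : Fin n) : Prop :=
  (i < τ i ∧ ¬ (((i : ℕ) + 1 = (τ i : ℕ)) ∧ τ (τ i) < τ i ∧ τ i < τ⁻¹ i)) ∨
  (τ⁻¹ i < i ∧ ((τ i : ℕ) + 1 = (i : ℕ)) ∧ i < τ (τ i))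

/-- The city represented by the element of `Fin n` with value `m` is visited ascending. -/
def AscAt {n : ℕ} (τ : Equiv.Perm (Fin n)) (m : ℕ) : Prop :=
  ∃ i : Fin n, (i : ℕ) = m ∧ Ascends τ i

/-- The city represented by the element of `Fin n` with value `m` is a step-back peak. -/
def SBPeakAt {n : ℕ} (τ : Equiv.Perm (Fin n)) (m : ℕ) : Prop :=
  ∃ i : Fin n, (i : ℕ) = m ∧ IsStepBackPeak τ i

/-- The pyramidal encodings of `x` and `y` have the same value at coordinate `m`. -/
def SameEnc {n : ℕ} (x y : Equiv.Perm (Fin n)) (m : ℕ) : Prop :=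
  (AscAt x m ↔ AscAt y m) ∧ (SBPeakAt x m ↔ SBPeakAt y m)

/-- The pyramidal encodings of `x` and `y` agree on the pair of neighboring
coordinates `(k, k+1)`, including the step-back marks overlapping the pair. -/
def SamePair {n : ℕ} (x y : Equiv.Perm (Fin n)) (k : ℕ) : Prop :=
  SameEnc x y k ∧ SameEnc x y (k + 1) ∧ (SBPeakAt x (k + 2) ↔ SBPeakAt y (k + 2))

/-- Characteristic vector of a tour, in `ℝ^E` with `E = Fin n × Fin n`. -/
def chv {n : ℕ} (τ : Equiv.Perm (Fin n)) : Fin n × Fin n → ℝ :=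
  fun e => if τ e.1 = e.2 then 1 else 0

/-- The vertices of the polytope `PSB(n)`: characteristic vectors of all
pyramidal tours with step-backs. -/
def PSBvertices (n : ℕ) : Set (Fin n × Fin n → ℝ) :=
  chv '' {τ : Equiv.Perm (Fin n) | IsPSB τ}

/-- `u` and `w` are adjacent vertices in the 1-skeleton of the polytope `conv S`:
the segment `[u,w]` is a one-dimensional face (an extreme subset) of the polytope. -/
def AdjacentIn {n : ℕ} (S : Set (Fin n × Fin n → ℝ)) (u w : Fin n × Fin n → ℝ) : Prop :=
  u ≠ w ∧ IsExtreme ℝ (convexHull ℝ S) (segment ℝ u w)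

/-!
The segment between the vertices of a pyramidal tour `x` and of the rotation `ρ : i ↦ i + 1` is a
face of the polytope as soon as every tour `τ` with `τ i ∈ {x i, ρ i}` for all `i` is `x` or `ρ`;
the descending tour `ρ⁻¹` is handled by inverting all tours. To see this, count the edges of `τ`
crossing a cut `{0, …, c} | {c + 1, …, n}`: a permutation crosses every cut equally often in both
directions, a pyramidal tour crosses it at most once each way, and `ρ` crosses downwards only by
its edge `n ↦ 0`. If `τ` leaves `n` as `x` does, all its downward crossings are those of `x`, and
a first deviation from `x` cannot exist. Otherwise a downward edge `d ↦ x d` of `x` used by `τ`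
would give two downward crossings of every cut inside `[x d, d)`, hence two upward ones, of which
`x` supplies at most one; so `τ` climbs by `ρ` from `x d` to `d` and never leaves `[x d, d]`,
which is impossible for a tour.
-/

open Finset Equiv

theorem isExtreme_segment_of_forall_eq_zero {ι : Type*} {S : Set (ι → ℝ)} (hS : S.Finite)
    (hnn : ∀ v ∈ S, 0 ≤ v) {u w : ι → ℝ} (hu : u ∈ S) (hw : w ∈ S)
    (huw : ∀ v ∈ S, (∀ e, u e = 0 → w e = 0 → v e = 0) → v = u ∨ v = w) :
    IsExtreme ℝ (convexHull ℝ S) (segment ℝ u w) := by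
  set Z : Set (ι → ℝ) := {y | ∀ e, u e = 0 → w e = 0 → y e = 0}
  have hZclosed : IsClosed Z := by
    simp only [Z, Set.ofPred_forall]
    exact isClosed_iInter fun e => isClosed_iInter fun _ => isClosed_iInter fun _ =>
      isClosed_eq (continuous_apply e) continuous_const
  have hZconvex : Convex ℝ Z := fun y hy z hz a b _ _ _ e hue hwe => by
    simp [hy e hue hwe, hz e hue hwe]
  have hface : IsExtreme ℝ (convexHull ℝ S) (convexHull ℝ S ∩ Z) := by
    refine ⟨Set.inter_subset_left, fun y₁ hy₁ y₂ hy₂ z ⟨_, hz⟩ ⟨a, b, ha, hb, _, hzab⟩ => ?_⟩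
    refine Set.mem_inter hy₁ fun e hue hwe => ?_
    have hzero : a * y₁ e + b * y₂ e = 0 := by simpa [← hzab] using hz e hue hwe
    have h₁ : 0 ≤ y₁ e := convexHull_min hnn (convex_Ici 0) hy₁ e
    have h₂ : 0 ≤ y₂ e := convexHull_min hnn (convex_Ici 0) hy₂ e
    nlinarith
  have hseg : segment ℝ u w = convexHull ℝ S ∩ Z := by
    refine subset_antisymm (Set.subset_inter ?_ ?_) ?_
    · rw [← convexHull_pair]
      exact convexHull_mono (Set.pair_subset hu hw)
    · rw [← convexHull_pair]
      refine convexHull_min ?_ hZconvex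
      rintro _ (rfl | rfl) e hue hwe
      exacts [hue, hwe]
    · -- Krein–Milman: the compact face is the convex hull of its vertices, which lie in `{u, w}`.
      have hext : (convexHull ℝ S ∩ Z).extremePoints ℝ ⊆ {u, w} := by
        rw [hface.extremePoints_eq]
        rintro y ⟨⟨_, hyZ⟩, hyext⟩
        exact huw y (extremePoints_convexHull_subset hyext) hyZ
      rw [← closure_convexHull_extremePoints ((hS.isCompact_convexHull ℝ).inter_right hZclosed)
        ((convex_convexHull ℝ S).inter hZconvex), ← convexHull_pair]
      exact closure_minimal (convexHull_mono hext)
        ((Set.toFinite {u, w}).isCompact_convexHull ℝ).isClosed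
  rw [hseg]
  exact hface

theorem Equiv.Perm.card_filter_and_not_apply {α : Type*} [Fintype α] (σ : Perm α)
    (p : α → Prop) [DecidablePred p] :
    #{i | p i ∧ ¬p (σ i)} = #{i | ¬p i ∧ p (σ i)} := by
  have hcomp : #{i | p (σ i)} = #{i | p i} := by
    simp only [card_filter]
    exact Equiv.sum_comp σ fun i => if p i then 1 else 0
  have h₁ := card_filter_add_card_filter_not (s := {i | p i}) fun i => p (σ i)
  have h₂ := card_filter_add_card_filter_not (s := {i | p (σ i)}) p
  simp only [filter_filter] at h₁ h₂
  have hboth : #{i | p i ∧ p (σ i)} = #{i | p (σ i) ∧ p i} := by simp_rw [and_comm]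
  have hswap : #{i | p (σ i) ∧ ¬p i} = #{i | ¬p i ∧ p (σ i)} := by simp_rw [and_comm]
  omega

section Crossings

variable {n : ℕ}

def CrossesDown (σ : Perm (Fin n)) (c : ℕ) (i : Fin n) : Prop :=
  (σ i : ℕ) ≤ c ∧ c < i

def CrossesUp (σ : Perm (Fin n)) (c : ℕ) (i : Fin n) : Prop :=
  (i : ℕ) ≤ c ∧ c < σ i

instance (σ : Perm (Fin n)) (c : ℕ) : DecidablePred (CrossesDown σ c) :=
  fun _ => inferInstanceAs (Decidable (_ ∧ _))

instance (σ : Perm (Fin n)) (c : ℕ) : DecidablePred (CrossesUp σ c) :=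
  fun _ => inferInstanceAs (Decidable (_ ∧ _))

theorem CrossesDown.of_apply_eq {σ τ : Perm (Fin n)} {c : ℕ} {i : Fin n}
    (h : CrossesDown τ c i) (hi : τ i = σ i) : CrossesDown σ c i := by
  rwa [CrossesDown, ← hi]

theorem CrossesUp.of_apply_eq {σ τ : Perm (Fin n)} {c : ℕ} {i : Fin n}
    (h : CrossesUp τ c i) (hi : τ i = σ i) : CrossesUp σ c i := by
  rwa [CrossesUp, ← hi]

theorem card_crossesUp_eq_card_crossesDown (σ : Perm (Fin n)) (c : ℕ) :
    #{i | CrossesUp σ c i} = #{i | CrossesDown σ c i} := by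
  have h := σ.card_filter_and_not_apply fun i => (i : ℕ) ≤ c
  simp only [not_le] at h
  convert h using 2 <;> ext i <;> simp only [mem_filter, mem_univ, true_and]
  exacts [Iff.rfl, and_comm]

theorem eq_last_of_crossesDown_finRotate {c : ℕ} {i : Fin (n + 1)}
    (h : CrossesDown (finRotate (n + 1)) c i) : i = Fin.last n := by
  by_contra hi
  have := coe_finRotate_of_ne_last hi
  exact absurd h (by unfold CrossesDown; omega)

theorem val_eq_of_crossesUp_finRotate {c : ℕ} {i : Fin (n + 1)}
    (h : CrossesUp (finRotate (n + 1)) c i) : (i : ℕ) = c := by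
  have hi : i ≠ Fin.last n := by
    rintro rfl
    exact absurd h (by simp [CrossesUp])
  have := coe_finRotate_of_ne_last hi
  unfold CrossesUp at h
  omega

end Crossings

namespace IsTour

variable {n : ℕ} {σ : Perm (Fin n)}

theorem mem_of_mapsTo (hσ : IsTour σ) {B : Set (Fin n)} (hB : Set.MapsTo σ B B) {i : Fin n}
    (hi : i ∈ B) (j : Fin n) : j ∈ B := by
  obtain ⟨k, rfl⟩ := hσ i j
  rw [Perm.coe_pow]
  exact hB.iterate k hi

theorem inv (hσ : IsTour σ) : IsTour σ⁻¹ := fun i j => by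
  obtain ⟨k, hk⟩ := hσ j i
  exact ⟨k, by rw [inv_pow, Perm.inv_eq_iff_eq, hk]⟩

theorem apply_ne_self (hσ : IsTour σ) {i j : Fin n} (hij : i ≠ j) : σ i ≠ i := fun h =>
  hij (hσ.mem_of_mapsTo (B := {i}) (Set.mapsTo_singleton.2 h) rfl j).symm

theorem exists_crossesDown {σ : Perm (Fin (n + 1))} (hσ : IsTour σ) {c : ℕ} (hc : c < n) :
    ∃ i, CrossesDown σ c i := by
  by_contra! h
  have hmaps : Set.MapsTo σ {i | c < (i : ℕ)} {i | c < (i : ℕ)} :=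
    fun i hi => not_le.1 fun hle => h i ⟨hle, hi⟩
  simpa using hσ.mem_of_mapsTo hmaps (i := Fin.last n) (by simpa using hc) 0

end IsTour

theorem isTour_finRotate (n : ℕ) : IsTour (finRotate n) := by
  intro i j
  rcases lt_or_ge n 2 with hn | hn
  · exact ⟨0, Fin.ext (by omega)⟩
  · have hsupp := support_finRotate_of_le hn
    exact (isCycle_finRotate_of_le hn).exists_pow_eq
      (Perm.mem_support.1 (by simp [hsupp])) (Perm.mem_support.1 (by simp [hsupp]))

namespace IsPyramidal

variable {n : ℕ} {x : Perm (Fin (n + 1))}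

theorem isPeak_iff (hx : IsPyramidal x) {i : Fin (n + 1)} : IsPeak x i ↔ i = Fin.last n := by
  rw [hx.2 i, Fin.ext_iff, Fin.val_last, Nat.add_sub_cancel]

theorem inv (hx : IsPyramidal x) : IsPyramidal x⁻¹ :=
  ⟨hx.1.inv, fun i => by rw [← hx.2 i, IsPeak, IsPeak, inv_inv, and_comm]⟩

theorem isPSB (hx : IsPyramidal x) : IsPSB x := by
  refine ⟨hx.1, fun i => ?_⟩
  rw [← hx.2 i]
  refine ⟨And.left, fun hp => ⟨hp, ?_⟩⟩
  obtain rfl := hx.isPeak_iff.1 hp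
  rintro (⟨-, -, h⟩ | ⟨h, -, -⟩) <;> exact (Fin.le_last _).not_gt h

theorem apply_ne_self (hx : IsPyramidal x) (i : Fin (n + 1)) : x i ≠ i := by
  intro h
  by_cases hi : i = Fin.last n
  · exact (hx.isPeak_iff.2 hi).2.ne h
  · exact hx.1.apply_ne_self hi h

theorem lt_inv_apply (hx : IsPyramidal x) {i : Fin (n + 1)} (hi : i ≠ Fin.last n)
    (h : x i < i) : i < x⁻¹ i := by
  refine lt_of_le_of_ne (not_lt.1 fun h' => hi (hx.isPeak_iff.1 ⟨h', h⟩)) fun heq => ?_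
  exact hx.apply_ne_self i (Perm.eq_inv_iff_eq.1 heq)

theorem exists_pow_last_eq (hx : IsPyramidal x) {i : Fin (n + 1)} (h : x i < i) :
    ∃ s, (x ^ s) (Fin.last n) = i ∧ ∀ u ≤ s, i ≤ (x ^ u) (Fin.last n) := by
  induction i using WellFoundedGT.induction with
  | _ i ih =>
    by_cases hi : i = Fin.last n
    · subst hi
      exact ⟨0, rfl, fun u hu => by rw [Nat.le_zero.1 hu]; rfl⟩
    · have hij := hx.lt_inv_apply hi h
      have hxj : x (x⁻¹ i) = i := x.apply_symm_apply i
      obtain ⟨s, hs, hge⟩ := ih _ hij (by rwa [hxj])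
      have hsucc : (x ^ (s + 1)) (Fin.last n) = i := by rw [pow_succ', Perm.mul_apply, hs, hxj]
      refine ⟨s + 1, hsucc, fun u hu => ?_⟩
      rcases hu.lt_or_eq with hu | rfl
      · exact hij.le.trans (hge u (Nat.lt_succ_iff.1 hu))
      · exact hsucc.ge

theorem card_crossesDown_le_one (hx : IsPyramidal x) (c : ℕ) : #{i | CrossesDown x c i} ≤ 1 := by
  have hdesc {i} (hi : CrossesDown x c i) : x i < i := Fin.lt_def.2 (hi.1.trans_lt hi.2)
  -- Both crossings lie on the descending run from `n`, which drops to `c` right after the first.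
  have hbefore {i j s t} (hs : (x ^ s) (Fin.last n) = i) (hi : CrossesDown x c i)
      (hj : CrossesDown x c j) (hge : ∀ u ≤ t, j ≤ (x ^ u) (Fin.last n)) : ¬s < t := by
    intro hst
    have hle := Fin.le_def.1 (hge (s + 1) hst)
    rw [pow_succ', Perm.mul_apply, hs] at hle
    exact absurd hle (not_le.2 (hi.1.trans_lt hj.2))
  refine card_le_one.2 fun i hi j hj => ?_
  simp only [mem_filter, mem_univ, true_and] at hi hj
  obtain ⟨s, hs, hges⟩ := hx.exists_pow_last_eq (hdesc hi)
  obtain ⟨t, ht, hget⟩ := hx.exists_pow_last_eq (hdesc hj)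
  obtain rfl : s = t := le_antisymm (not_lt.1 (hbefore ht hj hi hges))
    (not_lt.1 (hbefore hs hi hj hget))
  exact hs.symm.trans ht

theorem card_crossesUp_le_one (hx : IsPyramidal x) (c : ℕ) : #{i | CrossesUp x c i} ≤ 1 :=
  (card_crossesUp_eq_card_crossesDown x c).trans_le (hx.card_crossesDown_le_one c)

end IsPyramidal

theorem isPyramidal_finRotate {n : ℕ} (hn : 1 ≤ n) : IsPyramidal (finRotate (n + 1)) := by
  refine ⟨isTour_finRotate _, fun i => ?_⟩
  suffices IsPeak (finRotate (n + 1)) i ↔ i = Fin.last n by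
    rw [this, Fin.ext_iff, Fin.val_last, Nat.add_sub_cancel]
  constructor
  · rintro ⟨-, h⟩
    by_contra hi
    exact h.not_gt ((lt_finRotate_iff_ne_last i).2 hi)
  · rintro rfl
    have hlast_pos : (0 : Fin (n + 1)) < Fin.last n := Fin.lt_def.2 (by simp; omega)
    refine ⟨lt_of_le_of_ne (Fin.le_last _) fun h => hlast_pos.ne ?_, by rwa [finRotate_last]⟩
    rw [Perm.inv_eq_iff_eq, finRotate_last] at h
    exact h.symm

namespace IsPyramidal

variable {n : ℕ} {x τ : Perm (Fin (n + 1))}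

theorem eq_of_apply_last_eq (hx : IsPyramidal x) (hτ : IsTour τ)
    (hsel : ∀ i, τ i = x i ∨ τ i = finRotate (n + 1) i)
    (hlast : τ (Fin.last n) = x (Fin.last n)) : τ = x := by
  have hdown : ∀ i, x i < i → τ i = x i := by
    intro i hi
    obtain ⟨k, hk⟩ := hτ.exists_crossesDown (c := x i) (by have := Fin.is_le i; omega)
    have hkx : τ k = x k := by
      rcases hsel k with h | h
      · exact h
      · rwa [eq_last_of_crossesDown_finRotate (hk.of_apply_eq h)]
    have hki : k = i := card_le_one.1 (hx.card_crossesDown_le_one _) k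
      (by simpa using hk.of_apply_eq hkx) i
      (by simp only [mem_filter, mem_univ, true_and]; exact ⟨le_rfl, hi⟩)
    rwa [← hki]
  have hup : ∀ i, i < x i → τ i = x i := by
    intro i
    induction i using WellFoundedLT.induction with
    | _ i ih =>
      intro hi
      by_contra hne
      have hτi : (τ i : ℕ) = i + 1 := by
        rw [(hsel i).resolve_left hne, coe_finRotate_of_ne_last (Fin.ne_last_of_lt hi)]
      obtain ⟨j, hxj⟩ := x.surjective (τ i)
      have hji : j ≠ i := fun h => hne (by rw [← hxj, h])
      have hτj : τ j = x j := by
        rcases lt_trichotomy (x j) j with h | h | h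
        · exact hdown j h
        · exact absurd h (hx.apply_ne_self j)
        · refine ih j ?_ h
          have := Fin.lt_def.1 h
          rw [hxj, hτi] at this
          exact lt_of_le_of_ne (Fin.le_def.2 (by omega)) hji
      exact hji (τ.injective (hτj.trans hxj))
  ext1 i
  rcases lt_trichotomy (x i) i with h | h | h
  · exact hdown i h
  · exact absurd h (hx.apply_ne_self i)
  · exact hup i h

theorem apply_eq_finRotate_of_mem_Ico (hx : IsPyramidal x)
    (hsel : ∀ i, τ i = x i ∨ τ i = finRotate (n + 1) i)
    (hlast : τ (Fin.last n) ≠ x (Fin.last n)) {d : Fin (n + 1)} (hd : τ d = x d)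
    {i : Fin (n + 1)} (hdi : x d ≤ i) (hid : i < d) : τ i = finRotate (n + 1) i := by
  by_contra hne
  have hτlast : τ (Fin.last n) = 0 := ((hsel _).resolve_left hlast).trans finRotate_last
  have hd_ne : d ≠ Fin.last n := by
    rintro rfl
    exact hlast hd
  have hdown : ({Fin.last n, d} : Finset _) ⊆ ({k | CrossesDown τ i k} : Finset _) := by
    have hi_last := hid.trans_le (Fin.le_last d)
    intro k hk
    simp only [mem_insert, mem_singleton] at hk
    rcases hk with rfl | rfl
    · simpa [CrossesDown, hτlast] using hi_last
    · simpa [CrossesDown, hd] using And.intro (Fin.le_def.1 hdi) (Fin.lt_def.1 hid)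
  have hup : ({k | CrossesUp τ i k} : Finset _) ⊆ ({k | CrossesUp x i k} : Finset _) := by
    intro k hk
    simp only [mem_filter, mem_univ, true_and] at hk ⊢
    rcases hsel k with h | h
    · exact hk.of_apply_eq h
    · obtain rfl : k = i := Fin.ext (val_eq_of_crossesUp_finRotate (hk.of_apply_eq h))
      exact absurd h hne
  have : 2 ≤ 1 := calc
    2 = #{Fin.last n, d} := (card_pair hd_ne.symm).symm
    _ ≤ #{k | CrossesDown τ i k} := card_le_card hdown
    _ = #{k | CrossesUp τ i k} := (card_crossesUp_eq_card_crossesDown τ i).symm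
    _ ≤ #{k | CrossesUp x i k} := card_le_card hup
    _ ≤ 1 := hx.card_crossesUp_le_one i
  omega

theorem apply_ne_of_lt (hx : IsPyramidal x) (hτ : IsTour τ)
    (hsel : ∀ i, τ i = x i ∨ τ i = finRotate (n + 1) i)
    (hlast : τ (Fin.last n) ≠ x (Fin.last n)) {d : Fin (n + 1)} (hxd : x d < d) :
    τ d ≠ x d := by
  intro hd
  have hmaps : Set.MapsTo τ {k | x d ≤ k ∧ k ≤ d} {k | x d ≤ k ∧ k ≤ d} := by
    rintro k ⟨hk₁, hk₂⟩
    rcases hk₂.lt_or_eq with hk | rfl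
    · have hρk := coe_finRotate_of_ne_last (Fin.ne_last_of_lt hk)
      rw [Set.mem_ofPred_eq, apply_eq_finRotate_of_mem_Ico hx hsel hlast hd hk₁ hk,
        Fin.le_def, Fin.le_def, hρk]
      rw [Fin.le_def] at hk₁
      rw [Fin.lt_def] at hk
      omega
    · rw [hd]
      exact ⟨le_rfl, hxd.le⟩
  have hlast_mem := hτ.mem_of_mapsTo hmaps ⟨hxd.le, le_rfl⟩ (Fin.last n)
  exact hlast (by rw [← Fin.last_le_iff.1 hlast_mem.2, hd])

theorem eq_finRotate_of_apply_last_ne (hx : IsPyramidal x) (hτ : IsTour τ)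
    (hsel : ∀ i, τ i = x i ∨ τ i = finRotate (n + 1) i)
    (hlast : τ (Fin.last n) ≠ x (Fin.last n)) : τ = finRotate (n + 1) := by
  ext1 i
  induction i using WellFoundedGT.induction with
  | _ i ih =>
    by_contra hne
    have hτi : τ i = x i := (hsel i).resolve_right hne
    have hi : i ≠ Fin.last n := by
      rintro rfl
      exact hlast hτi
    have hix : i < x i := (hx.apply_ne_self i).lt_or_gt.resolve_left
      fun h => apply_ne_of_lt hx hτ hsel hlast h hτi
    have hρi := coe_finRotate_of_ne_last hi
    have hxi_ne : (x i : ℕ) ≠ i + 1 := fun h => hne (hτi.trans (Fin.ext (h.trans hρi.symm)))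
    have hxi_le := Fin.is_le (x i)
    have hixv := Fin.lt_def.1 hix
    let j : Fin (n + 1) := ⟨x i - 1, by omega⟩
    have hij : i < j := Fin.lt_def.2 (by simp only [j]; omega)
    have hjx : j < x i := Fin.lt_def.2 (by simp only [j]; omega)
    have hρj : finRotate (n + 1) j = x i := Fin.ext <| by
      rw [coe_finRotate_of_ne_last (Fin.ne_last_of_lt hjx)]
      simp only [j]
      omega
    exact hij.ne (τ.injective ((ih j hij).trans (hρj.trans hτi.symm))).symm

theorem eq_or_eq_finRotate (hx : IsPyramidal x) (hτ : IsTour τ)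
    (hsel : ∀ i, τ i = x i ∨ τ i = finRotate (n + 1) i) : τ = x ∨ τ = finRotate (n + 1) := by
  by_cases hlast : τ (Fin.last n) = x (Fin.last n)
  · exact .inl (eq_of_apply_last_eq hx hτ hsel hlast)
  · exact .inr (eq_finRotate_of_apply_last_ne hx hτ hsel hlast)

end IsPyramidal

section Vertices

variable {n : ℕ}

theorem chv_injective : Function.Injective (chv (n := n)) := fun σ σ' h =>
  Equiv.ext fun i => by simpa [chv, eq_comm] using congrFun h (i, σ i)

theorem forall_apply_eq_or_of_chv {σ x y : Perm (Fin n)}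
    (h : ∀ e, chv x e = 0 → chv y e = 0 → chv σ e = 0) (i : Fin n) :
    σ i = x i ∨ σ i = y i := by
  by_contra! hne
  simpa [chv, eq_comm, hne.1, hne.2] using h (i, σ i)

theorem adjacentIn_PSBvertices {x y : Perm (Fin n)} (hx : IsPSB x) (hy : IsPSB y) (hxy : x ≠ y)
    (h : ∀ σ, IsTour σ → (∀ i, σ i = x i ∨ σ i = y i) → σ = x ∨ σ = y) :
    AdjacentIn (PSBvertices n) (chv x) (chv y) := by
  refine ⟨chv_injective.ne hxy, isExtreme_segment_of_forall_eq_zero ((Set.toFinite _).image chv) ?_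
    ⟨x, hx, rfl⟩ ⟨y, hy, rfl⟩ ?_⟩
  · rintro _ ⟨σ, -, rfl⟩
    exact Pi.le_def.2 fun e => by unfold chv; positivity
  · rintro _ ⟨σ, hσ, rfl⟩ hzero
    rcases h σ hσ.1 (forall_apply_eq_or_of_chv hzero) with rfl | rfl
    exacts [.inl rfl, .inr rfl]

end Vertices

theorem forall_inv_apply_eq_or {n : ℕ} {σ x y : Perm (Fin n)} (h : ∀ i, σ i = x i ∨ σ i = y i)
    (j : Fin n) : σ⁻¹ j = x⁻¹ j ∨ σ⁻¹ j = y⁻¹ j := by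
  obtain ⟨i, rfl⟩ := σ.surjective j
  rw [show σ⁻¹ (σ i) = i from σ.symm_apply_apply i, Perm.eq_inv_iff_eq, Perm.eq_inv_iff_eq]
  exact (h i).imp Eq.symm Eq.symm

/-- Every pyramidal tour gives a vertex of `PSB(n)` adjacent to the vertex of the
all-ascending tour `⟨1,2,…,n⟩` and to the vertex of the all-descending tour. -/
theorem stmt7 (n : ℕ) (hn : 4 ≤ n) (a : Equiv.Perm (Fin n))
    (ha : ∀ i : Fin n, (a i : ℕ) = ((i : ℕ) + 1) % n)
    (x : Equiv.Perm (Fin n)) (hx : IsPyramidal x) :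
    (x = a ∨ AdjacentIn (PSBvertices n) (chv x) (chv a)) ∧
    (x = a⁻¹ ∨ AdjacentIn (PSBvertices n) (chv x) (chv a⁻¹)) := by
  obtain ⟨m, rfl⟩ : ∃ m, n = m + 1 := ⟨n - 1, by omega⟩
  obtain rfl : a = finRotate (m + 1) := Equiv.ext fun i => Fin.ext <| by
    rw [ha, finRotate_apply, Fin.val_add, Fin.val_one', Nat.add_mod_mod]
  have hρ := isPyramidal_finRotate (show 1 ≤ m by omega)
  refine ⟨or_iff_not_imp_left.2 fun hxa => adjacentIn_PSBvertices hx.isPSB hρ.isPSB hxa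
      fun τ hτ hsel => hx.eq_or_eq_finRotate hτ hsel,
    or_iff_not_imp_left.2 fun hxa => adjacentIn_PSBvertices hx.isPSB hρ.inv.isPSB hxa
      fun τ hτ hsel => ?_⟩
  have := hx.inv.eq_or_eq_finRotate hτ.inv (by simpa using forall_inv_apply_eq_or hsel)
  simpa [inv_eq_iff_eq_inv] using this
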